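/- arXiv:0902.0876 — 2 statements merged into one kernel-verified Lean document; each statement's English description precedes it below -/
import Mathlib

section
/- Let (T, F) be a torsion pair on an abelian category A and B the associated tilted heart in D(A). A complex T• with all terms in T is exact (acyclic) as a complex in A if and only if it is exact as a complex in B. -/
open CategoryTheory CategoryTheory.Limits CategoryTheory.Pretriangulated

universe w v u

/-- A torsion pair `(T, F)` on an abelian category. -/
structure TorsionPair (C : Type u) [Category.{v} C] [Abelian C] where
  torsion : C → Prop
  torsionFree : C → Prop
  torsion_summand : ∀ (X Y : C) (i : Y ⟶ X) (r : X ⟶ Y),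
    torsion X → i ≫ r = 𝟙 Y → torsion Y
  torsionFree_summand : ∀ (X Y : C) (i : Y ⟶ X) (r : X ⟶ Y),
    torsionFree X → i ≫ r = 𝟙 Y → torsionFree Y
  hom_orth : ∀ (X Y : C), torsion X → torsionFree Y → ∀ f : X ⟶ Y, f = 0
  exists_ses : ∀ X : C, ∃ (T₀ F₀ : C) (f : T₀ ⟶ X) (g : X ⟶ F₀) (w : f ≫ g = 0),
    torsion T₀ ∧ torsionFree F₀ ∧ (CategoryTheory.ShortComplex.mk f g w).ShortExact

variable {C : Type u} [Category.{v} C] [Abelian C] [HasDerivedCategory.{w} C]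

/-- The heart of the HRS t-structure associated with a torsion pair: complexes `X` with
`H⁰(X) ∈ T`, `H⁻¹(X) ∈ F` and `Hⁱ(X) = 0` for `i ≠ -1, 0`. -/
def TorsionPair.heart (tp : TorsionPair C) : DerivedCategory C → Prop := fun X =>
  tp.torsion ((DerivedCategory.homologyFunctor C 0).obj X) ∧
  tp.torsionFree ((DerivedCategory.homologyFunctor C (-1)).obj X) ∧
  ∀ i : ℤ, i ≠ 0 → i ≠ -1 → IsZero ((DerivedCategory.homologyFunctor C i).obj X)

/-- The objects of the heart isomorphic to `F₀[1]` for a torsion-free object `F₀`. -/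
def TorsionPair.heartF1 (tp : TorsionPair C) : DerivedCategory C → Prop := fun X =>
  ∃ F₀ : C, tp.torsionFree F₀ ∧
    Nonempty (X ≅ ((DerivedCategory.singleFunctor C 0).obj F₀)⟦(1 : ℤ)⟧)

/-- The objects of the heart isomorphic to `T₀` (as a stalk complex in degree `0`)
for a torsion object `T₀`. -/
def TorsionPair.heartT (tp : TorsionPair C) : DerivedCategory C → Prop := fun X =>
  ∃ T₀ : C, tp.torsion T₀ ∧ Nonempty (X ≅ (DerivedCategory.singleFunctor C 0).obj T₀)

/-- A complex of objects of `B` (indexed by `ℤ`) is exact in `B` iff it splits into short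
exact sequences of `B`; since short exact sequences in the heart `B` are exactly the
distinguished triangles of `D(A)` with vertices in `B`, exactness in `B` of a complex of
torsion objects is expressed by this splitting into triangles. -/
def TorsionPair.ExactInHeart (tp : TorsionPair C) (K : CochainComplex C ℤ) : Prop :=
  ∃ (Z : ℤ → DerivedCategory C) (_ : ∀ n, tp.heart (Z n))
    (i : ∀ n : ℤ, Z n ⟶ (DerivedCategory.singleFunctor C 0).obj (K.X n))
    (p : ∀ n : ℤ, (DerivedCategory.singleFunctor C 0).obj (K.X n) ⟶ Z (n + 1))
    (h : ∀ n : ℤ, Z (n + 1) ⟶ (Z n)⟦(1 : ℤ)⟧),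
    (∀ n : ℤ, Pretriangulated.Triangle.mk (i n) (p n) (h n) ∈
      distTriang (DerivedCategory C)) ∧
    (∀ n : ℤ, (DerivedCategory.singleFunctor C 0).map (K.d n (n + 1)) =
      p n ≫ i (n + 1))

/-! If `K` is exact in `A`, it splices into short exact sequences `0 → Zⁿ → Kⁿ → Zⁿ⁺¹ → 0` of
cycles; each `Zⁿ⁺¹` is a quotient of `Kⁿ ∈ T`, hence lies in `T ⊆ B`, and short exact sequences
of `A` give distinguished triangles. Conversely, `H⁰ : D(A) → A` is cohomological and sends a
triangle `Zⁿ → Kⁿ → Zⁿ⁺¹ →` of the heart to a short exact sequence as soon as `H⁻¹(Zⁿ⁺¹) = 0`, which holds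
because `H⁻¹(Zⁿ⁺¹)` embeds into `H⁻¹(Kⁿ⁺¹) = 0`; splicing these sequences shows `K` exact in `A`. -/

namespace TorsionPair

variable {A : Type*} [Category* A] [Abelian A] (tp : TorsionPair A)

lemma torsion_of_iso {X Y : A} (e : X ≅ Y) (hX : tp.torsion X) : tp.torsion Y :=
  tp.torsion_summand X Y e.inv e.hom hX e.inv_hom_id

lemma torsionFree_of_isZero {X : A} (hX : IsZero X) : tp.torsionFree X := by
  obtain ⟨_, F₀, _, _, _, _, hF₀, _⟩ := tp.exists_ses X
  exact tp.torsionFree_summand F₀ X 0 0 hF₀ (hX.eq_of_src _ _)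

lemma torsion_of_epi {X Y : A} (q : X ⟶ Y) [Epi q] (hX : tp.torsion X) : tp.torsion Y := by
  obtain ⟨T₀, F₀, f, g, w, hT₀, hF₀, hS⟩ := tp.exists_ses Y
  have hg : g = 0 := by
    rw [← cancel_epi q, comp_zero]
    exact tp.hom_orth _ _ hX hF₀ _
  have := hS.mono_f
  have : Epi f := hS.exact.epi_f hg
  have : IsIso f := isIso_of_mono_of_epi f
  exact tp.torsion_of_iso (asIso f) hT₀

end TorsionPair

namespace CategoryTheory.ShortComplex

variable {A : Type*} [Category* A] [Abelian A]

lemma Exact.epi_comp_comp_mono {X₀ X₁ X₂ X₃ X₄ : A} {f : X₁ ⟶ X₂} {g : X₂ ⟶ X₃}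
    {w : f ≫ g = 0} (hS : (ShortComplex.mk f g w).Exact) (e : X₀ ⟶ X₁) [Epi e]
    (m : X₃ ⟶ X₄) [Mono m] :
    (ShortComplex.mk (e ≫ f) (g ≫ m) (by simp [reassoc_of% w])).Exact := by
  have hS' : (ShortComplex.mk (e ≫ f) g (by simp [w])).Exact :=
    (exact_iff_of_epi_of_isIso_of_mono (S₂ := ShortComplex.mk f g w)
      (S₁ := ShortComplex.mk (e ≫ f) g (by simp [w])) { τ₁ := e, τ₂ := 𝟙 _, τ₃ := 𝟙 _ }).2 hS
  exact (exact_iff_of_epi_of_isIso_of_mono (S₁ := ShortComplex.mk (e ≫ f) g (by simp [w]))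
    (S₂ := ShortComplex.mk (e ≫ f) (g ≫ m) (by simp [reassoc_of% w]))
    { τ₁ := 𝟙 _, τ₂ := 𝟙 _, τ₃ := m }).1 hS'

lemma ShortExact.comp_iso_X₂ {S : ShortComplex A} (hS : S.ShortExact) {Y : A} (e : S.X₂ ≅ Y) :
    (ShortComplex.mk (S.f ≫ e.hom) (e.inv ≫ S.g) (by simp)).ShortExact :=
  shortExact_of_iso (S₁ := S) (isoMk (Iso.refl _) e (Iso.refl _)) hS

end CategoryTheory.ShortComplex

namespace HomologicalComplex

variable {A : Type*} [Category* A] [Abelian A] {ι : Type*} {c : ComplexShape ι}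
  (K : HomologicalComplex A c)

lemma epi_toCycles_of_exactAt {i j : ι} (hij : c.prev j = i) (hj : K.ExactAt j) :
    Epi (K.toCycles i j) := by
  subst hij
  exact hj.epi_toCycles

lemma shortExact_cycles_of_exactAt {i j : ι} (hij : c.Rel i j) (hj : K.ExactAt j) :
    (ShortComplex.mk (K.iCycles i) (K.toCycles i j)
      (by rw [← cancel_mono (K.iCycles j)]; simp)).ShortExact where
  exact :=
    (ShortComplex.exact_iff_of_epi_of_isIso_of_mono
      (S₁ := ShortComplex.mk (K.iCycles i) (K.toCycles i j)
        (by rw [← cancel_mono (K.iCycles j)]; simp))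
      (S₂ := ShortComplex.mk (K.iCycles i) (K.d i j) (K.iCycles_d i j))
      { τ₁ := 𝟙 _, τ₂ := 𝟙 _, τ₃ := K.iCycles j }).2
      (ShortComplex.exact_of_f_is_kernel _ (K.cyclesIsKernel i j (c.next_eq' hij)))
  epi_g := K.epi_toCycles_of_exactAt (c.prev_eq' hij) hj

lemma exactAt_of_factorization {i j k : ι} (hi : c.prev j = i) (hk : c.next j = k)
    {G₁ G₂ : A} (e₁ : K.X i ⟶ G₁) (m₁ : G₁ ⟶ K.X j) (e₂ : K.X j ⟶ G₂) (m₂ : G₂ ⟶ K.X k)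
    [Epi e₁] [Mono m₂] (hd₁ : K.d i j = e₁ ≫ m₁) (hd₂ : K.d j k = e₂ ≫ m₂) (w : m₁ ≫ e₂ = 0)
    (hS : (ShortComplex.mk m₁ e₂ w).Exact) :
    K.ExactAt j := by
  rw [K.exactAt_iff' i j k hi hk]
  change (ShortComplex.mk (K.d i j) (K.d j k) (K.d_comp_d i j k)).Exact
  convert hS.epi_comp_comp_mono e₁ m₂ using 2

end HomologicalComplex

lemma CochainComplex.exactAt_of_shortExact_factorization {A : Type*} [Category* A] [Abelian A]
    (K : CochainComplex A ℤ) (G : ℤ → A) (m : ∀ n, G n ⟶ K.X n) (e : ∀ n, K.X n ⟶ G (n + 1))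
    (w : ∀ n, m n ≫ e n = 0) (hS : ∀ n, (ShortComplex.mk (m n) (e n) (w n)).ShortExact)
    (hd : ∀ n, K.d n (n + 1) = e n ≫ m (n + 1)) (n : ℤ) :
    K.ExactAt n := by
  obtain ⟨n, rfl⟩ : ∃ n', n = n' + 1 := ⟨n - 1, by omega⟩
  have := (hS n).epi_g
  have := (hS (n + 1 + 1)).mono_f
  exact K.exactAt_of_factorization (by simp) (by simp) _ _ _ _ (hd n) (hd (n + 1)) _
    (hS (n + 1)).exact

namespace DerivedCategory

lemma isZero_homologyFunctor_obj_singleFunctor_obj (X : C) {n i : ℤ} (hi : i ≠ n) :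
    IsZero ((homologyFunctor C i).obj ((singleFunctor C n).obj X)) := by
  rcases lt_or_gt_of_ne hi with hi | hi
  exacts [isZero_of_isGE _ n i hi, isZero_of_isLE _ n i hi]

lemma isZero_homologyFunctor_obj₁_of_distTriang (T : Triangle (DerivedCategory C))
    (hT : T ∈ distTriang _) {n₀ n₁ : ℤ} (h : n₀ + 1 = n₁)
    (h₃ : IsZero ((homologyFunctor C n₀).obj T.obj₃))
    (h₂ : IsZero ((homologyFunctor C n₁).obj T.obj₂)) :
    IsZero ((homologyFunctor C n₁).obj T.obj₁) :=
  (HomologySequence.exact₁ T hT n₀ n₁ h).isZero_X₂ (h₃.eq_of_src _ _) (h₂.eq_of_tgt _ _)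

lemma shortExact_map_homologyFunctor_of_distTriang (T : Triangle (DerivedCategory C))
    (hT : T ∈ distTriang _) {n₀ n₁ n₂ : ℤ} (h₀₁ : n₀ + 1 = n₁)
    (h₁₂ : n₁ + 1 = n₂) (h₃ : IsZero ((homologyFunctor C n₀).obj T.obj₃))
    (h₁ : IsZero ((homologyFunctor C n₂).obj T.obj₁)) :
    ((shortComplexOfDistTriangle T hT).map (homologyFunctor C n₁)).ShortExact where
  exact := HomologySequence.exact₂ T hT n₁
  mono_f := (HomologySequence.mono_homologyMap_mor₁_iff T hT n₀ n₁ h₀₁).2 (h₃.eq_of_src _ _)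
  epi_g := (HomologySequence.epi_homologyMap_mor₂_iff T hT n₁ n₂ h₁₂).2 (h₁.eq_of_tgt _ _)

end DerivedCategory

namespace TorsionPair

open DerivedCategory

variable (tp : TorsionPair C)

lemma heart_singleFunctor_obj {X : C} (hX : tp.torsion X) : tp.heart ((singleFunctor C 0).obj X) :=
  ⟨tp.torsion_of_iso ((singleFunctorCompHomologyFunctorIso C 0).app X).symm hX,
    tp.torsionFree_of_isZero (isZero_homologyFunctor_obj_singleFunctor_obj X (by norm_num)),
    fun _ hi _ => isZero_homologyFunctor_obj_singleFunctor_obj X hi⟩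

lemma exactInHeart_of_exactAt {K : CochainComplex C ℤ} (hK : ∀ n, tp.torsion (K.X n))
    (hex : ∀ n, K.ExactAt n) : tp.ExactInHeart K := by
  have hS n := K.shortExact_cycles_of_exactAt (by simp : (ComplexShape.up ℤ).Rel n (n + 1))
    (hex (n + 1))
  have hZ n : tp.torsion (K.cycles n) :=
    have := K.epi_toCycles_of_exactAt (by simp : (ComplexShape.up ℤ).prev n = n - 1) (hex n)
    tp.torsion_of_epi (K.toCycles (n - 1) n) (hK (n - 1))
  exact ⟨fun n => (singleFunctor C 0).obj (K.cycles n),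
    fun n => tp.heart_singleFunctor_obj (hZ n),
    fun n => (singleFunctor C 0).map (K.iCycles n),
    fun n => (singleFunctor C 0).map (K.toCycles n (n + 1)),
    fun n => (hS n).singleδ, fun n => (hS n).singleTriangle_distinguished,
    fun n => by rw [← Functor.map_comp, K.toCycles_i]⟩

lemma ExactInHeart.exactAt {tp : TorsionPair C} {K : CochainComplex C ℤ} (hK : tp.ExactInHeart K)
    (n : ℤ) : K.ExactAt n := by
  obtain ⟨Z, hZ, i, p, δ, hT, hd⟩ := hK
  have hZneg n : IsZero ((homologyFunctor C (-1)).obj (Z n)) :=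
    isZero_homologyFunctor_obj₁_of_distTriang _ (hT n) (by norm_num : (-2 : ℤ) + 1 = -1)
      ((hZ (n + 1)).2.2 (-2) (by norm_num) (by norm_num))
      (isZero_homologyFunctor_obj_singleFunctor_obj _ (by norm_num))
  have hS n := shortExact_map_homologyFunctor_of_distTriang _ (hT n)
    (by norm_num : (-1 : ℤ) + 1 = 0) (by norm_num : (0 : ℤ) + 1 = 1) (hZneg (n + 1))
    ((hZ n).2.2 1 (by norm_num) (by norm_num))
  let γ := singleFunctorCompHomologyFunctorIso C 0
  refine K.exactAt_of_shortExact_factorization (fun n => (homologyFunctor C 0).obj (Z n))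
    (fun n => (homologyFunctor C 0).map (i n) ≫ γ.hom.app (K.X n))
    (fun n => γ.inv.app (K.X n) ≫ (homologyFunctor C 0).map (p n))
    _ (fun n => (hS n).comp_iso_X₂ (γ.app (K.X n)))
    (fun n => ?_) n
  have := γ.hom.naturality (K.d n (n + 1))
  dsimp at this
  rw [Category.assoc, ← Functor.map_comp_assoc, ← hd n, this, Iso.inv_hom_id_app_assoc]

end TorsionPair

/-- A complex with all terms in the torsion class `T` is exact in `A` if and only if it is
exact in the tilted heart `B`. -/
theorem exact_in_A_iff_exact_in_heart (tp : TorsionPair C) (K : CochainComplex C ℤ)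
    (hK : ∀ n : ℤ, tp.torsion (K.X n)) :
    (∀ n : ℤ, K.ExactAt n) ↔ tp.ExactInHeart K :=
  ⟨tp.exactInHeart_of_exactAt hK, fun h => h.exactAt⟩
end

section
/- Let (T, F) be a tilting torsion pair on an abelian category A. Then the natural functor from the Verdier quotient K(T)/(K(T) ∩ K_ex(A)) to the derived category D(A), induced by the inclusion K(T) ↪ K(A), is an equivalence of triangulated categories. -/
open CategoryTheory CategoryTheory.Limits CategoryTheory.Pretriangulated

universe w v u

/-!
Every complex `X` over `A` has a quasi-isomorphism `X ⟶ Z` in `K(A)` with `Z` in `K(T)`. Embedding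
each term of `X⟦-1⟧` into a torsion object `Tⁿ` gives a degreewise monomorphism of `X⟦-1⟧` into the
contractible complex `cone (𝟙 T)`; its cokernel `Z` has torsion terms, because a torsion class is
closed under extensions and quotients, and the short exact sequence
`X⟦-1⟧ ⟶ cone (𝟙 T) ⟶ Z` identifies `Z` with `X` up to quasi-isomorphism, since its middle term
vanishes in `K(A)`. As quasi-isomorphisms in `K(A)` admit a calculus of left fractions, such right
resolutions through the fully faithful functor `K(T) ⥤ K(A)` make `K(T) ⥤ D(A)` a localization.
-/

namespace CategoryTheory

variable {C₁ C₂ D : Type*} [Category* C₁] [Category* C₂] [Category* D]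
  (Φ : C₁ ⥤ C₂) [Φ.Full] [Φ.Faithful] (W : MorphismProperty C₂)

namespace MorphismProperty

lemma hasLeftCalculusOfFractions_inverseImage [W.HasLeftCalculusOfFractions]
    (hΦ : ∀ X₂ : C₂, ∃ (X₁ : C₁) (w : X₂ ⟶ Φ.obj X₁), W w) :
    (W.inverseImage Φ).HasLeftCalculusOfFractions where
  exists_leftFraction X Y φ := by
    obtain ⟨ψ, hψ⟩ := HasLeftCalculusOfFractions.exists_leftFraction
      (RightFraction.mk (Φ.map φ.s) φ.hs (Φ.map φ.f))
    obtain ⟨Z, r, hr⟩ := hΦ ψ.Y'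
    refine ⟨LeftFraction.mk (Φ.preimage (ψ.f ≫ r)) (Φ.preimage (ψ.s ≫ r)) ?_,
      Φ.map_injective ?_⟩
    · simpa using W.comp_mem _ _ ψ.hs hr
    · simpa using hψ =≫ r
  ext X' X Y f₁ f₂ s hs fac := by
    obtain ⟨Z', t, ht, fac'⟩ := HasLeftCalculusOfFractions.ext
      (Φ.map f₁) (Φ.map f₂) (Φ.map s) hs (by simp only [← Φ.map_comp, fac])
    obtain ⟨Z, r, hr⟩ := hΦ Z'
    exact ⟨Z, Φ.preimage (t ≫ r), by simpa using W.comp_mem _ _ ht hr,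
      Φ.map_injective (by simpa using fac' =≫ r)⟩

lemma map_eq_of_map_map_eq {D₁ : Type*} [Category* D₁] (L₁ : C₁ ⥤ D₁)
    (hL₁ : (W.inverseImage Φ).IsInvertedBy L₁) (L : C₂ ⥤ D) [L.IsLocalization W]
    [W.HasLeftCalculusOfFractions] (hΦ : ∀ X₂ : C₂, ∃ (X₁ : C₁) (w : X₂ ⟶ Φ.obj X₁), W w)
    {X Y : C₁} {f g : X ⟶ Y} (h : L.map (Φ.map f) = L.map (Φ.map g)) :
    L₁.map f = L₁.map g := by
  obtain ⟨Z', s, hs, fac⟩ := (map_eq_iff_postcomp L W _ _).1 h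
  obtain ⟨Z, r, hr⟩ := hΦ Z'
  have := hL₁ (Φ.preimage (s ≫ r)) (by simpa using W.comp_mem _ _ hs hr)
  rw [← cancel_mono (L₁.map (Φ.preimage (s ≫ r))), ← L₁.map_comp, ← L₁.map_comp]
  exact congrArg L₁.map (Φ.map_injective (by simpa using fac =≫ r))

end MorphismProperty

open CategoryTheory.Localization in
theorem Functor.isLocalization_comp_of_exists_rightResolution
    (L : C₂ ⥤ D) [L.IsLocalization W] [W.HasLeftCalculusOfFractions]
    (hΦ : ∀ X₂ : C₂, ∃ (X₁ : C₁) (w : X₂ ⟶ Φ.obj X₁), W w) :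
    (Φ ⋙ L).IsLocalization (W.inverseImage Φ) := by
  have := W.hasLeftCalculusOfFractions_inverseImage Φ hΦ
  let W₁ := W.inverseImage Φ
  have hW₁ : W₁.IsInvertedBy (Φ ⋙ L) := fun _ _ f hf ↦ inverts L W _ hf
  let G := lift (Φ ⋙ L) hW₁ W₁.Q
  let e : W₁.Q ⋙ G ≅ Φ ⋙ L := fac _ hW₁ _
  have G_map_Q_map {X Y : C₁} (f : X ⟶ Y) :
      G.map (W₁.Q.map f) = e.hom.app X ≫ L.map (Φ.map f) ≫ e.inv.app Y :=
    (NatIso.naturality_1 e.symm f).symm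
  have : G.Full := G.full_of_comp_essSurj W₁.Q fun X Y φ ↦ by
    obtain ⟨ψ, hψ⟩ := exists_leftFraction L W (e.inv.app X ≫ φ ≫ e.hom.app Y)
    obtain ⟨Z, r, hr⟩ := hΦ ψ.Y'
    let χ : W₁.LeftFraction X Y :=
      .mk (Φ.preimage (ψ.f ≫ r)) (Φ.preimage (ψ.s ≫ r))
        (by simpa [W₁] using W.comp_mem _ _ ψ.hs hr)
    have := inverts W₁.Q W₁ _ χ.hs
    refine ⟨χ.map W₁.Q (inverts _ _), ?_⟩
    rw [← cancel_mono (G.map (W₁.Q.map χ.s)), ← G.map_comp,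
      MorphismProperty.LeftFraction.map_comp_map_s, G_map_Q_map, G_map_Q_map]
    have hφ : φ ≫ e.hom.app Y = e.hom.app X ≫ ψ.map L (inverts L W) := by simp [← hψ]
    simp only [χ, reassoc_of% hφ, Functor.map_preimage, L.map_comp, Category.assoc,
      ψ.map_comp_map_s_assoc]
  have : G.Faithful := Functor.faithful_of_comp_of_hasLeftCalculusOfFractions W₁.Q W₁ G
    fun X Y f g hfg ↦ W.map_eq_of_map_map_eq Φ W₁.Q (inverts _ _) L hΦ
      (by simpa [G_map_Q_map, cancel_mono] using hfg)
  have : G.EssSurj := ⟨fun Y ↦ by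
    have := essSurj L W
    obtain ⟨X, w, hw⟩ := hΦ (L.objPreimage Y)
    exact ⟨W₁.Q.obj X, ⟨e.app X ≪≫ (isoOfHom L W w hw).symm ≪≫ L.objObjPreimageIso Y⟩⟩⟩
  have : G.IsEquivalence := { }
  exact IsLocalization.of_equivalence_target W₁.Q W₁ (Φ ⋙ L) G.asEquivalence e

end CategoryTheory

namespace CochainComplex

open HomComplex

variable {C : Type*} [Category* C] [Preadditive C] [HasBinaryBiproducts C]

-- reducible, so that `simp` sees a morphism to `T n` as a morphism to the `n`-th term
abbrev ofZeroDifferential (T : ℤ → C) : CochainComplex C ℤ where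
  X := T
  d _ _ := 0

variable {X : CochainComplex C ℤ} {T : ℤ → C} (u : ∀ n, X.X n ⟶ T n)

noncomputable def liftToMappingConeId : X ⟶ mappingCone (𝟙 (ofZeroDifferential T)) :=
  mappingCone.lift _
    (Cocycle.mk (Cochain.mk (fun p q _ ↦ X.d p q ≫ u q)) 2 (by lia) (by
      ext p q hpq
      simp [δ_v 1 2 (by lia) _ p q hpq (p + 1) (p + 1) (by lia) rfl]))
    (Cochain.ofHoms u) (by cat_disch)

lemma liftToMappingConeId_f_snd (n : ℤ) :
    (liftToMappingConeId u).f n ≫ (mappingCone.snd _).v n n (add_zero n) = u n := by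
  simp [liftToMappingConeId]

lemma mono_liftToMappingConeId_f [∀ n, Mono (u n)] (n : ℤ) :
    Mono ((liftToMappingConeId u).f n) :=
  mono_of_mono_fac (liftToMappingConeId_f_snd u n)

end CochainComplex

namespace HomotopyCategory

variable {C : Type*} [Category* C] [Abelian C]

open CochainComplex in
lemma exists_quasiIso_shift_of_shortExact {S : ShortComplex (CochainComplex C ℤ)}
    (hS : S.ShortExact) (h₂ : IsZero ((quotient C (.up ℤ)).obj S.X₂)) :
    ∃ w : ((quotient C (.up ℤ)).obj S.X₁)⟦(1 : ℤ)⟧ ⟶ (quotient C (.up ℤ)).obj S.X₃,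
      quasiIso C (.up ℤ) w := by
  -- the third map of the triangle `S.X₁ ⟶ S.X₂ ⟶ mappingCone S.f ⟶ S.X₁⟦1⟧`
  let δ := (quotient C (.up ℤ)).map (mappingCone.triangle S.f).mor₃ ≫
    ((quotient C (.up ℤ)).commShiftIso (1 : ℤ)).hom.app S.X₁
  have : IsIso δ :=
    (Triangle.isZero₂_iff_isIso₃ _ (mappingCone_triangleh_distinguished S.f)).1 h₂
  have := mappingCone.quasiIso_descShortComplex hS
  exact ⟨inv δ ≫ (quotient C (.up ℤ)).map (mappingCone.descShortComplex S),
    (MorphismProperty.cancel_left_of_respectsIso _ _ _).2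
      ((quotient_map_mem_quasiIso_iff _).2 this)⟩

end HomotopyCategory

namespace CategoryTheory.ObjectProperty

open CochainComplex

variable {C : Type*} [Category* C] [Abelian C] (P : ObjectProperty C)
  [P.IsClosedUnderQuotients] [P.IsClosedUnderExtensions]

lemma exists_quasiIso_from_shift_one (hP : ∀ X : C, ∃ (T : C) (i : X ⟶ T), P T ∧ Mono i)
    (X : CochainComplex C ℤ) :
    ∃ (Z : CochainComplex C ℤ) (_ : ∀ n, P (Z.X n))
      (w : ((HomotopyCategory.quotient C (.up ℤ)).obj X)⟦(1 : ℤ)⟧ ⟶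
        (HomotopyCategory.quotient C (.up ℤ)).obj Z),
      HomotopyCategory.quasiIso C (.up ℤ) w := by
  choose T u hT hu using fun n ↦ hP (X.X n)
  let f := liftToMappingConeId u
  have : Mono f := HomologicalComplex.mono_of_mono_f f (mono_liftToMappingConeId_f u)
  have hS : (ShortComplex.mk f (cokernel.π f) (cokernel.condition f)).ShortExact :=
    { exact := ShortComplex.exact_of_g_is_cokernel _ (cokernelIsCokernel f) }
  obtain ⟨w, hw⟩ := HomotopyCategory.exists_quasiIso_shift_of_shortExact hS
    ((HomotopyCategory.isZero_quotient_obj_iff _).2 ⟨mappingCone.homotopyToZeroOfId _⟩)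
  refine ⟨cokernel f, fun n ↦ P.prop_of_epi ((cokernel.π f).f n) ?_, w, hw⟩
  exact P.prop_of_iso
    (HomologicalComplex.homotopyCofiber.XIsoBiprod (𝟙 _) n (n + 1) rfl).symm
    (P.prop_biprod (hT _) (hT _))

lemma exists_quasiIso_to_mapHomotopyCategory_ι
    (hP : ∀ X : C, ∃ (T : C) (i : X ⟶ T), P T ∧ Mono i) (K : HomotopyCategory C (.up ℤ)) :
    ∃ (Y : HomotopyCategory P.FullSubcategory (.up ℤ))
      (w : K ⟶ (P.ι.mapHomotopyCategory (.up ℤ)).obj Y),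
      HomotopyCategory.quasiIso C (.up ℤ) w := by
  obtain ⟨Z, hZ, w, hw⟩ := P.exists_quasiIso_from_shift_one hP (K⟦(-1 : ℤ)⟧).as
  exact ⟨(HomotopyCategory.quotient _ _).obj (HomologicalComplex.liftObjectProperty P Z hZ),
    (shiftFunctorCompIsoId _ (-1 : ℤ) 1 (by omega)).inv.app K ≫ w,
    (MorphismProperty.cancel_left_of_respectsIso _ _ _).2 hw⟩

end CategoryTheory.ObjectProperty

namespace TorsionPair

variable {C : Type u} [Category.{v} C] [Abelian C] (tp : TorsionPair C)

lemma torsion_of_forall_hom_torsionFree_eq_zero {X : C}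
    (h : ∀ (F : C) (f : X ⟶ F), tp.torsionFree F → f = 0) : tp.torsion X := by
  obtain ⟨T, F, f, g, w, hT, hF, hS⟩ := tp.exists_ses X
  have := hS.mono_f
  have : Epi f := hS.exact.epi_f (h F g hF)
  have := isIso_of_mono_of_epi f
  exact tp.torsion_summand T X (inv f) f hT (IsIso.inv_hom_id f)

instance : ObjectProperty.IsClosedUnderQuotients tp.torsion where
  prop_of_epi p _ hT := tp.torsion_of_forall_hom_torsionFree_eq_zero fun F f hF ↦ by
    rw [← cancel_epi p, comp_zero]
    exact tp.hom_orth _ F hT hF _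

instance : ObjectProperty.IsClosedUnderExtensions tp.torsion where
  prop_X₂_of_shortExact hS h₁ h₃ := by
    refine tp.torsion_of_forall_hom_torsionFree_eq_zero fun F f hF ↦ ?_
    have := hS.epi_g
    -- `f` vanishes on `S.X₁`, hence factors through `S.X₃`
    rw [← hS.exact.g_desc f (tp.hom_orth _ F h₁ hF _), tp.hom_orth _ F h₃ hF (hS.exact.desc f _),
      comp_zero]

end TorsionPair

/-- For a tilting torsion pair `(T, F)` on `A`, the functor `K(T) → D(A)` induced by the
inclusion `K(T) ↪ K(A)` exhibits `D(A)` as the Verdier quotient (localization) of `K(T)`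
by the maps with acyclic cone, i.e. the induced functor
`K(T)/(K(T) ∩ K_ex(A)) → D(A)` is an equivalence of triangulated categories. -/
theorem verdier_quotient_equiv_derivedCategory {C : Type u} [Category.{v} C] [Abelian C]
    [HasDerivedCategory.{w} C] (tp : TorsionPair C)
    (tilting : ∀ X : C, ∃ (T₀ : C) (i : X ⟶ T₀), tp.torsion T₀ ∧ Mono i) :
    ((ObjectProperty.ι tp.torsion).mapHomotopyCategory (ComplexShape.up ℤ) ⋙
        DerivedCategory.Qh).IsLocalization
      ((HomotopyCategory.quasiIso C (ComplexShape.up ℤ)).inverseImage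
        ((ObjectProperty.ι tp.torsion).mapHomotopyCategory (ComplexShape.up ℤ))) :=
  Functor.isLocalization_comp_of_exists_rightResolution _ _ _
    (ObjectProperty.exists_quasiIso_to_mapHomotopyCategory_ι tp.torsion tilting)
end
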